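/- Let Z be a compact metrizable space, φ a continuous flow on Z, L ≥ 0, and suppose the Borel probability measure m₁ can be L-transported along φ to the Borel probability measure m₂. Then: (i) for every open set U ⊆ Z, m₂(U) ≤ m₁(⋃_{l ∈ [−L,L]} φ(l, U)); and (ii) for every closed set C ⊆ Z, m₁(⋂_{l ∈ [−L,L]} φ(l, C)) ≤ m₂(C). -/

import Mathlib

open MeasureTheory

/-- The set `Δ^L = {(x₁,x₂) : ∃ l ∈ [−L,L], x₂ = φ(l,x₁)}` associated to a flow `φ`. -/
def flowDelta {Z : Type*} [TopologicalSpace Z] (φ : Flow ℝ Z) (L : ℝ) : Set (Z × Z) :=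
  {p : Z × Z | ∃ l ∈ Set.Icc (-L) L, p.2 = φ l p.1}

/-- The topological support of a measure: points all of whose open neighborhoods
have positive measure. -/
def measureSupport {W : Type*} [TopologicalSpace W] [MeasurableSpace W]
    (M : Measure W) : Set W :=
  {x : W | ∀ U : Set W, IsOpen U → x ∈ U → M U ≠ 0}

/-- `m₁` can be `L`-transported along the flow `φ` to `m₂`: there is a Borel probability
measure `M` on `Z × Z` with topological support contained in `Δ^L`, whose first and
second marginals are `m₁` and `m₂` respectively. -/
def Transports {Z : Type*} [TopologicalSpace Z] [MeasurableSpace Z]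
    (φ : Flow ℝ Z) (L : ℝ) (m₁ m₂ : Measure Z) : Prop :=
  ∃ M : Measure (Z × Z), IsProbabilityMeasure M ∧
    measureSupport M ⊆ flowDelta φ L ∧
    M.map Prod.fst = m₁ ∧ M.map Prod.snd = m₂

/-! A transport plan is concentrated on its support (`Z × Z` is second countable), hence on
`Δ^L`. So almost every pair `(x₁, x₂)` has `x₁ = φ(l, x₂)` for some `|l| ≤ L`: if `x₂ ∈ U` then
`x₁ ∈ ⋃ φ(l, U)`, and if `x₁ ∈ ⋂ φ(l, C)` then `x₂ ∈ C` because `φ(l, ·)` is injective.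
Comparing the two marginals gives both inequalities. -/

theorem measureSupport_eq_support {W : Type*} [TopologicalSpace W] [MeasurableSpace W]
    (M : Measure W) : measureSupport M = M.support := by
  ext x
  rw [(nhds_basis_opens x).mem_measureSupport]
  simp only [measureSupport, Set.mem_ofPred_eq, pos_iff_ne_zero, and_imp]
  exact ⟨fun h U hx hU => h U hU hx, fun h U hU hx => h U hx hU⟩

theorem MeasureTheory.Measure.map_apply_le_map_apply_of_ae {α β : Type*} [MeasurableSpace α]
    [MeasurableSpace β] {μ : Measure α} {f g : α → β} (hf : Measurable f)
    (hg : AEMeasurable g μ) {s t : Set β} (hs : MeasurableSet s)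
    (h : ∀ᵐ x ∂μ, f x ∈ s → g x ∈ t) : μ.map f s ≤ μ.map g t := by
  rw [Measure.map_apply hf hs]
  exact (measure_mono_ae h).trans (Measure.le_map_apply hg t)

section FlowDelta

variable {Z : Type*} [TopologicalSpace Z] {φ : Flow ℝ Z} {L : ℝ} {p : Z × Z}

theorem exists_fst_eq_of_mem_flowDelta (hp : p ∈ flowDelta φ L) :
    ∃ l ∈ Set.Icc (-L) L, p.1 = φ l p.2 := by
  obtain ⟨l, hl, hp⟩ := hp
  refine ⟨-l, ⟨neg_le_neg hl.2, neg_le.1 hl.1⟩, ?_⟩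
  rw [hp, ← Flow.map_add, neg_add_cancel, Flow.map_zero_apply]

theorem fst_mem_iUnion_image_of_mem_flowDelta {U : Set Z} (hp : p ∈ flowDelta φ L)
    (hU : p.2 ∈ U) : p.1 ∈ ⋃ l ∈ Set.Icc (-L) L, (fun z => φ l z) '' U := by
  obtain ⟨l, hl, h⟩ := exists_fst_eq_of_mem_flowDelta hp
  exact Set.mem_biUnion hl ⟨p.2, hU, h.symm⟩

theorem snd_mem_of_mem_flowDelta {C : Set Z} (hp : p ∈ flowDelta φ L)
    (hC : p.1 ∈ ⋂ l ∈ Set.Icc (-L) L, (fun z => φ l z) '' C) : p.2 ∈ C := by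
  obtain ⟨l, hl, h⟩ := exists_fst_eq_of_mem_flowDelta hp
  obtain ⟨c, hc, hcp⟩ := Set.mem_iInter₂.1 hC l hl
  rwa [← (φ.toHomeomorph l).injective (hcp.trans h)]

theorem Transports.exists_ae_mem_flowDelta [MeasurableSpace Z]
    [HereditarilyLindelofSpace (Z × Z)] {m₁ m₂ : Measure Z} (h : Transports φ L m₁ m₂) :
    ∃ M : Measure (Z × Z), (∀ᵐ q ∂M, q ∈ flowDelta φ L) ∧
      M.map Prod.fst = m₁ ∧ M.map Prod.snd = m₂ := by
  obtain ⟨M, -, hsupp, h₁, h₂⟩ := h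
  rw [measureSupport_eq_support] at hsupp
  exact ⟨M, Filter.mem_of_superset Measure.support_mem_ae hsupp, h₁, h₂⟩

end FlowDelta

theorem stmt_7_general {Z : Type*} [TopologicalSpace Z] [CompactSpace Z]
    [TopologicalSpace.MetrizableSpace Z] [MeasurableSpace Z] [BorelSpace Z]
    (φ : Flow ℝ Z) (L : ℝ)
    (m₁ m₂ : Measure Z)
    (h : Transports φ L m₁ m₂) :
    (∀ U : Set Z, IsOpen U →
        m₂ U ≤ m₁ (⋃ l ∈ Set.Icc (-L) L, (fun z => φ l z) '' U)) ∧
    (∀ C : Set Z, IsClosed C →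
        m₁ (⋂ l ∈ Set.Icc (-L) L, (fun z => φ l z) '' C) ≤ m₂ C) := by
  obtain ⟨M, hΔ, rfl, rfl⟩ := h.exists_ae_mem_flowDelta
  refine ⟨fun U hU => ?_, fun C hC => ?_⟩
  · exact Measure.map_apply_le_map_apply_of_ae measurable_snd measurable_fst.aemeasurable
      hU.measurableSet (hΔ.mono fun p hp => fst_mem_iUnion_image_of_mem_flowDelta hp)
  · have hK : IsClosed (⋂ l ∈ Set.Icc (-L) L, (fun z => φ l z) '' C) :=
      isClosed_biInter fun l _ => (φ.toHomeomorph l).isClosedMap C hC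
    exact Measure.map_apply_le_map_apply_of_ae measurable_fst measurable_snd.aemeasurable
      hK.measurableSet (hΔ.mono fun p hp => snd_mem_of_mem_flowDelta hp)

/-- if `m₁` can be `L`-transported along `φ` to `m₂`, then
(i) for every open `U`, `m₂ U ≤ m₁ (⋃_{l∈[−L,L]} φ(l,U))`, and
(ii) for every closed `C`, `m₁ (⋂_{l∈[−L,L]} φ(l,C)) ≤ m₂ C`. -/
theorem stmt_7 {Z : Type*} [TopologicalSpace Z] [CompactSpace Z]
    [TopologicalSpace.MetrizableSpace Z] [MeasurableSpace Z] [BorelSpace Z]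
    (φ : Flow ℝ Z) (L : ℝ) (hL : 0 ≤ L)
    (m₁ m₂ : Measure Z) [IsProbabilityMeasure m₁] [IsProbabilityMeasure m₂]
    (h : Transports φ L m₁ m₂) :
    (∀ U : Set Z, IsOpen U →
        m₂ U ≤ m₁ (⋃ l ∈ Set.Icc (-L) L, (fun z => φ l z) '' U)) ∧
    (∀ C : Set Z, IsClosed C →
        m₁ (⋂ l ∈ Set.Icc (-L) L, (fun z => φ l z) '' C) ≤ m₂ C) :=
  stmt_7_general φ L m₁ m₂ h
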